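/- arXiv:1711.07605 — 6 statements merged into one kernel-verified Lean document; each statement's English description precedes it below -/
import Mathlib

section
/- Assume the value semigroup Γ = ν(R \ {0}) is symmetric, i.e. c = 2δ. Then for every standard R-submodule M ⊆ O, the conductor of M satisfies c_M ≤ c − dev(M). -/
open PowerSeries

/-- `ν f = n` : the order of the power series `f` equals `n`. -/
def HasOrd {k : Type*} [Semiring k] (f : PowerSeries k) (n : ℕ) : Prop :=
  PowerSeries.coeff n f ≠ 0 ∧ ∀ m < n, PowerSeries.coeff m f = 0

/-- The set of orders of the nonzero elements of `S ⊆ k[[z]]`. -/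
def ValSet {k : Type*} [Semiring k] (S : Set (PowerSeries k)) : Set ℕ :=
  {n | ∃ f ∈ S, HasOrd f n}

/-!
Since `M` contains an element of order `m` and `z^m·O ⊆ R`, it contains `z^(2m)·O`; from there,
peeling off leading terms shows `z^a·O ⊆ M` as soon as every `n ≥ a` lies in `Δ_M`, so
`c_M ≤ n + 1` for some gap `n` of `Δ_M`. As `Γ + Δ_M ⊆ Δ_M`, the map `x ↦ n - x` sends the
elements of `Δ_M` below `n` injectively into the gaps of `Γ`, whence
`c_M ≤ δ + |ℕ \ Δ_M|`. The monomials `z^g` at the gaps `g` of `Δ_M` are linearly independent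
modulo `M`, so `|ℕ \ Δ_M| ≤ deg M`, and `δ + deg M = c - dev M` because `c = 2δ`.
-/

open Set

theorem succ_le_ncard_compl_add_ncard_compl {Γ Δ : Set ℕ}
    (hadd : ∀ a ∈ Γ, ∀ b ∈ Δ, a + b ∈ Δ) (hΓ : Γᶜ.Finite) (hΔ : Δᶜ.Finite)
    {n : ℕ} (hn : n ∉ Δ) : n + 1 ≤ Γᶜ.ncard + Δᶜ.ncard := by
  have hlow : (Iic n ∩ Δ).ncard ≤ Γᶜ.ncard := by
    refine ncard_le_ncard_of_injOn (n - ·) ?_ ?_ hΓ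
    · rintro x ⟨hxn, hxΔ⟩ hxΓ
      exact hn (Nat.sub_add_cancel hxn ▸ hadd _ hxΓ x hxΔ)
    · intro x hx y hy hxy
      have := mem_Iic.1 hx.1
      have := mem_Iic.1 hy.1
      simp only at hxy
      omega
  have hhigh : (Iic n \ Δ).ncard ≤ Δᶜ.ncard := ncard_le_ncard (sdiff_subset_compl _ _) hΔ
  calc n + 1 = (Iic n).ncard := (ncard_Iic_nat n).symm
    _ = (Iic n ∩ Δ).ncard + (Iic n \ Δ).ncard :=
      (ncard_inter_add_ncard_sdiff_eq_ncard _ _ (finite_Iic n)).symm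
    _ ≤ Γᶜ.ncard + Δᶜ.ncard := add_le_add hlow hhigh

theorem LinearIndepOn.ncard_le_finrank {R M ι : Type*} [Ring R] [StrongRankCondition R]
    [AddCommGroup M] [Module R M] [Module.Finite R M] {v : ι → M} {s : Set ι}
    (h : LinearIndepOn R v s) : s.ncard ≤ Module.finrank R M := by
  have := h.finite
  cases nonempty_fintype s
  rw [← Nat.card_coe_set_eq, Nat.card_eq_fintype_card]
  exact h.fintype_card_le_finrank

section Order

variable {R : Type*} [Semiring R]

theorem hasOrd_iff_order_eq {f : R⟦X⟧} {n : ℕ} : HasOrd f n ↔ f.order = n :=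
  order_eq_nat.symm

theorem hasOrd_X_pow [Nontrivial R] (n : ℕ) : HasOrd ((X : R⟦X⟧) ^ n) n :=
  hasOrd_iff_order_eq.2 (order_X_pow n)

theorem HasOrd.mul [NoZeroDivisors R] {f g : R⟦X⟧} {a b : ℕ} (hf : HasOrd f a)
    (hg : HasOrd g b) : HasOrd (f * g) (a + b) := by
  rw [hasOrd_iff_order_eq] at *
  rw [order_mul, hf, hg, Nat.cast_add]

theorem mem_valSet_of_X_pow_mul_mem [Nontrivial R] {S : Set R⟦X⟧} {m n : ℕ}
    (hS : ∀ f, X ^ m * f ∈ S) (hmn : m ≤ n) : n ∈ ValSet S :=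
  ⟨X ^ m * X ^ (n - m), hS _, by
    rw [← pow_add, Nat.add_sub_cancel' hmn]; exact hasOrd_X_pow n⟩

theorem add_mem_valSet_of_mul_mem [NoZeroDivisors R] {S T : Set R⟦X⟧}
    (hST : ∀ r ∈ S, ∀ f ∈ T, r * f ∈ T) {a b : ℕ} (ha : a ∈ ValSet S)
    (hb : b ∈ ValSet T) :
    a + b ∈ ValSet T := by
  obtain ⟨r, hr, hra⟩ := ha
  obtain ⟨f, hf, hfb⟩ := hb
  exact ⟨r * f, hST r hr f hf, hra.mul hfb⟩

end Order

section Field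

variable {k : Type*} [Field k]

theorem HasOrd.exists_eq_X_pow_mul {f : k⟦X⟧} {n : ℕ} (hf : HasOrd f n) :
    ∃ u : k⟦X⟧ˣ, f = X ^ n * (u : k⟦X⟧) := by
  have hn : f.order.toNat = n := by rw [hasOrd_iff_order_eq.1 hf]; rfl
  have hu : IsUnit (divXPowOrder f) := by
    rw [isUnit_iff_constantCoeff, constantCoeff_divXPowOrder, hn, isUnit_iff_ne_zero]
    exact hf.1
  exact ⟨hu.unit, by rw [IsUnit.unit_spec, ← hn, X_pow_order_mul_divXPowOrder]⟩

theorem X_pow_add_mul_mem {S T : Set k⟦X⟧} {m a : ℕ} (hS : ∀ f, X ^ m * f ∈ S)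
    (hST : ∀ r ∈ S, ∀ f ∈ T, r * f ∈ T) (ha : a ∈ ValSet T) (f : k⟦X⟧) :
    X ^ (m + a) * f ∈ T := by
  obtain ⟨g, hgT, hg⟩ := ha
  obtain ⟨u, rfl⟩ := HasOrd.exists_eq_X_pow_mul hg
  convert hST _ (hS (((u⁻¹ : k⟦X⟧ˣ) : k⟦X⟧) * f)) _ hgT using 1
  linear_combination (-(X ^ (m + a) * f)) * u.inv_mul

section Submodule

variable {M : Submodule k k⟦X⟧}

theorem X_pow_mul_mem_of_succ {a : ℕ} (ha : a ∈ ValSet (M : Set k⟦X⟧))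
    (hsucc : ∀ f, X ^ (a + 1) * f ∈ M) (f : k⟦X⟧) : X ^ a * f ∈ M := by
  obtain ⟨g, hgM, hg⟩ := ha
  obtain ⟨u, rfl⟩ := HasOrd.exists_eq_X_pow_mul hg
  obtain ⟨q, rfl⟩ : ∃ q, f = (u : k⟦X⟧) * q :=
    ⟨((u⁻¹ : k⟦X⟧ˣ) : k⟦X⟧) * f, (u.mul_inv_cancel_left f).symm⟩
  have hsplit : X ^ a * ((u : k⟦X⟧) * q) = constantCoeff q • (X ^ a * (u : k⟦X⟧))
      + X ^ (a + 1) * ((u : k⟦X⟧) * mk fun p => coeff (p + 1) q) := by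
    conv_lhs => rw [eq_X_mul_shift_add_const q]
    rw [smul_eq_C_mul]
    ring
  rw [hsplit]
  exact M.add_mem (M.smul_mem _ hgM) (hsucc _)

theorem X_pow_mul_mem_of_forall_mem_valSet {N a : ℕ} (hN : ∀ f, X ^ N * f ∈ M)
    (ha : ∀ n, a ≤ n → n ∈ ValSet (M : Set k⟦X⟧)) (f : k⟦X⟧) : X ^ a * f ∈ M := by
  induction h : N - a generalizing a f with
  | zero =>
    rw [show a = N + (a - N) by omega, pow_add, mul_assoc]
    exact hN _
  | succ d ih =>
    exact X_pow_mul_mem_of_succ (ha a le_rfl)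
      (ih (fun n hn => ha n (by omega)) · (by omega)) f

theorem sInf_X_pow_mul_mem_le {N : ℕ} (hN : ∀ f, X ^ N * f ∈ M) {Γ : Set ℕ}
    (hadd : ∀ a ∈ Γ, ∀ b ∈ ValSet (M : Set k⟦X⟧), a + b ∈ ValSet (M : Set k⟦X⟧))
    (hΓ : Γᶜ.Finite) (hM : (ValSet (M : Set k⟦X⟧))ᶜ.Finite) :
    sInf {c : ℕ | ∀ f : k⟦X⟧, X ^ c * f ∈ M}
      ≤ Γᶜ.ncard + (ValSet (M : Set k⟦X⟧))ᶜ.ncard := by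
  set c := sInf {c : ℕ | ∀ f : k⟦X⟧, X ^ c * f ∈ M}
  rcases Nat.eq_zero_or_pos c with hc | hc
  · omega
  have hnot : c - 1 ∉ {c : ℕ | ∀ f : k⟦X⟧, X ^ c * f ∈ M} :=
    Nat.notMem_of_lt_sInf (by omega)
  obtain ⟨n, hcn, hn⟩ : ∃ n, c - 1 ≤ n ∧ n ∉ ValSet (M : Set k⟦X⟧) := by
    by_contra! h
    exact hnot (X_pow_mul_mem_of_forall_mem_valSet hN h)
  have := succ_le_ncard_compl_add_ncard_compl hadd hΓ hM hn
  omega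

theorem finite_quotient_of_X_pow_mul_mem {N : ℕ} (hN : ∀ f, X ^ N * f ∈ M) :
    Module.Finite k (k⟦X⟧ ⧸ M) := by
  let φ : k⟦X⟧ →ₗ[k] Fin N → k := LinearMap.pi fun i => coeff (i : ℕ)
  have hker : LinearMap.ker φ ≤ M := by
    intro f hf
    obtain ⟨g, rfl⟩ : X ^ N ∣ f := X_pow_dvd_iff.2 fun i hi => congr_fun hf ⟨i, hi⟩
    exact hN g
  have : Module.Finite k (k⟦X⟧ ⧸ LinearMap.ker φ) :=
    Module.Finite.equiv φ.quotKerEquivRange.symm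
  exact Module.Finite.of_surjective _ (Submodule.factor_surjective hker)

theorem coeff_linearCombination_X_pow (l : ℕ →₀ k) (j : ℕ) :
    coeff j (Finsupp.linearCombination k (fun n => (X : k⟦X⟧) ^ n) l) = l j := by
  rw [Finsupp.linearCombination_apply, map_finsuppSum]
  simp [coeff_X_pow]

theorem linearIndepOn_mkQ_X_pow_compl_valSet :
    LinearIndepOn k (fun n => M.mkQ (X ^ n)) (ValSet (M : Set k⟦X⟧))ᶜ := by
  rw [linearIndepOn_iff]
  intro l hl hl0
  set f := Finsupp.linearCombination k (fun n => (X : k⟦X⟧) ^ n) l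
  have hcoeff : ∀ j, coeff j f = l j := coeff_linearCombination_X_pow l
  have hfM : f ∈ M := by
    rw [← Submodule.Quotient.mk_eq_zero, ← Submodule.mkQ_apply, Finsupp.apply_linearCombination]
    exact hl0
  -- a nonzero `f ∈ M` would have its order both in the support of `l` and in `ValSet M`
  have hf : f = 0 := by
    by_contra hf
    obtain ⟨n, hn⟩ := ENat.ne_top_iff_exists.1 (order_eq_top.not.2 hf)
    have hord : HasOrd f n := hasOrd_iff_order_eq.2 hn.symm
    have hnl : n ∈ l.support := by
      rw [Finsupp.mem_support_iff, ← hcoeff]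
      exact hord.1
    exact hl hnl ⟨f, hfM, hord⟩
  ext j
  rw [← hcoeff, hf, map_zero, Finsupp.coe_zero, Pi.zero_apply]

end Submodule

end Field

theorem conductor_le_of_symmetric_general
    {k : Type*} [Field k]
    (R : Subalgebra k (PowerSeries k)) (m : ℕ)
    (hRm : ∀ f : PowerSeries k, PowerSeries.X ^ m * f ∈ R)
    (hsym : sInf {c : ℕ | ∀ n, c ≤ n → n ∈ ValSet (R : Set (PowerSeries k))}
      = 2 * ((ValSet (R : Set (PowerSeries k)))ᶜ).ncard)
    (M : Submodule k (PowerSeries k))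
    (hMR : ∀ r ∈ R, ∀ f ∈ M, r * f ∈ M)
    (hstd : ValSet (R : Set (PowerSeries k)) ⊆ ValSet (M : Set (PowerSeries k))) :
    ((sInf {c : ℕ | ∀ f : PowerSeries k, PowerSeries.X ^ c * f ∈ M} : ℕ) : ℤ)
      ≤ ((sInf {c : ℕ | ∀ n, c ≤ n → n ∈ ValSet (R : Set (PowerSeries k))} : ℕ) : ℤ)
        - ((((ValSet (R : Set (PowerSeries k)))ᶜ).ncard : ℤ)
            - (Module.finrank k (PowerSeries k ⧸ M) : ℤ)) := by
  have hΓ : (ValSet (R : Set k⟦X⟧))ᶜ.Finite := (finite_Iio m).subset fun n hn =>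
    not_le.1 fun hmn => hn (mem_valSet_of_X_pow_mul_mem hRm hmn)
  have hΔ : (ValSet (M : Set k⟦X⟧))ᶜ.Finite := hΓ.subset (compl_subset_compl.2 hstd)
  have hM : ∀ f, X ^ (m + m) * f ∈ M :=
    X_pow_add_mul_mem hRm hMR (hstd (mem_valSet_of_X_pow_mul_mem hRm le_rfl))
  have hcM :=
    sInf_X_pow_mul_mem_le hM (fun a ha b hb => add_mem_valSet_of_mul_mem hMR ha hb) hΓ hΔ
  have : Module.Finite k (k⟦X⟧ ⧸ M) := finite_quotient_of_X_pow_mul_mem hM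
  have hdim := (linearIndepOn_mkQ_X_pow_compl_valSet (M := M)).ncard_le_finrank
  rw [hsym]
  omega

/-- Let `R ⊆ O = k[[z]]` be a `k`-subalgebra containing `z^m·O`, with value
semigroup `Γ = ν(R \ {0})`, genus `δ = |ℕ \ Γ|` and conductor `c`.  Assume `Γ` is symmetric,
i.e. `c = 2δ`.  Then every standard `R`-submodule `M ⊆ O` (a `k`-subspace stable under
multiplication by `R` with `Γ ⊆ Δ_M`) satisfies `c_M ≤ c - dev(M)`, where
`dev(M) = δ - dim_k(O/M)` and `c_M` is the least `c'` with `z^{c'}·O ⊆ M`. -/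
theorem conductor_le_of_symmetric
    {k : Type*} [Field k]
    (R : Subalgebra k (PowerSeries k)) (m : ℕ) (hm : 1 ≤ m)
    (hRm : ∀ f : PowerSeries k, PowerSeries.X ^ m * f ∈ R)
    (hsym : sInf {c : ℕ | ∀ n, c ≤ n → n ∈ ValSet (R : Set (PowerSeries k))}
      = 2 * ((ValSet (R : Set (PowerSeries k)))ᶜ).ncard)
    (M : Submodule k (PowerSeries k))
    (hMR : ∀ r ∈ R, ∀ f ∈ M, r * f ∈ M)
    (hstd : ValSet (R : Set (PowerSeries k)) ⊆ ValSet (M : Set (PowerSeries k))) :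
    ((sInf {c : ℕ | ∀ f : PowerSeries k, PowerSeries.X ^ c * f ∈ M} : ℕ) : ℤ)
      ≤ ((sInf {c : ℕ | ∀ n, c ≤ n → n ∈ ValSet (R : Set (PowerSeries k))} : ℕ) : ℤ)
        - ((((ValSet (R : Set (PowerSeries k)))ᶜ).ncard : ℤ)
            - (Module.finrank k (PowerSeries k ⧸ M) : ℤ)) :=
  conductor_le_of_symmetric_general R m hRm hsym M hMR hstd
end

section
/- For an R-submodule 𝓜 ⊆ O^{rk}, the following are equivalent: (a) the O-submodule of O^{rk} generated by 𝓜 is all of O^{rk}; (b) the image of 𝓜 in O^{rk}/z·O^{rk} spans this rk-dimensional k-vector space; (c) for every choice of valuation parameters 0 ≤ υ_0 < … < υ_{rk−1} < 1 and every 0 ≤ i ≤ rk−1, the component Δ^{(i)}(𝓜) contains 0. Moreover, (c) for one choice of the parameters implies (c) for every choice. -/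
open PowerSeries

/-- `υ(y) = v` for the cumulative valuation determined by `υ(ε_i) = υ i`:
`v` is the minimum over `i` of `ν(y_i) + υ_i`. -/
def CumOrd {k : Type*} [Semiring k] {rk : ℕ} (υ : Fin rk → ℝ)
    (y : Fin rk → PowerSeries k) (v : ℝ) : Prop :=
  (∃ (i : Fin rk) (n : ℕ), HasOrd (y i) n ∧ (n : ℝ) + υ i = v) ∧
  (∀ (i : Fin rk) (n : ℕ), HasOrd (y i) n → v ≤ (n : ℝ) + υ i)

/-- The `i`-th component `Δ^{(i)}(S) = {a ∈ ℕ | a + υ_i ∈ υ(S \ {0})}`. -/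
def DeltaComp {k : Type*} [Semiring k] {rk : ℕ} (υ : Fin rk → ℝ)
    (S : Set (Fin rk → PowerSeries k)) (i : Fin rk) : Set ℕ :=
  {a | ∃ y ∈ S, CumOrd υ y ((a : ℝ) + υ i)}

/-- Valuation parameters `0 ≤ υ_0 < υ_1 < … < υ_{rk-1} < 1`. -/
def ValidVal {rk : ℕ} (υ : Fin rk → ℝ) : Prop :=
  (∀ i, 0 ≤ υ i ∧ υ i < 1) ∧ StrictMono υ

/-! Everything is decided modulo `z`. If vectors `y_0, …, y_{rk-1}` of `𝓜` have a matrix of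
constant terms with nonzero determinant, their matrix is invertible over `O` and its rows span
`O^{rk}`; conversely the constant terms of the `O`-span of `𝓜` are those of `𝓜` itself, since
`(f • y)(0) = f(0) • y(0)`. As all parameters lie in `[0, 1)`, `υ(y) = υ_i` means exactly that the
constant terms of `y` vanish before position `i` and not at `i`, a condition independent of `υ`;
one such vector for each `i` gives a triangular matrix of constant terms with nonzero diagonal. -/

open Matrix

theorem Matrix.span_range_row_eq_top_of_isUnit_det {A ι : Type*} [CommRing A] [Fintype ι]
    [DecidableEq ι] {M : Matrix ι ι A} (h : IsUnit M.det) :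
    Submodule.span A (Set.range M.row) = ⊤ := by
  rw [← range_vecMulLinear, LinearMap.range_eq_top]
  exact vecMul_surjective_iff_isUnit.2 ((isUnit_iff_isUnit_det M).2 h)

theorem exists_mem_coeff_zero_eq_of_mem_span {k ι : Type*} [CommSemiring k]
    {𝓜 : Submodule k (ι → k⟦X⟧)} {v : ι → k⟦X⟧}
    (hv : v ∈ Submodule.span k⟦X⟧ (𝓜 : Set (ι → k⟦X⟧))) :
    ∃ y ∈ 𝓜, ∀ i, coeff 0 (y i) = coeff 0 (v i) := by
  let φ : (ι → k⟦X⟧) →ₗ[k] ι → k := (coeff 0).compLeft ι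
  suffices φ v ∈ 𝓜.map φ by
    obtain ⟨y, hy, hφ⟩ := this
    exact ⟨y, hy, congrFun hφ⟩
  induction hv using Submodule.span_induction with
  | mem w hw => exact Submodule.mem_map_of_mem hw
  | zero => exact (𝓜.map φ).zero_mem
  | add w₁ w₂ _ _ h₁ h₂ => simpa only [map_add] using (𝓜.map φ).add_mem h₁ h₂
  | smul f w _ h =>
    convert (𝓜.map φ).smul_mem (constantCoeff f) h using 1
    ext i
    simp [φ]

section Triangular

variable {k ι : Type*} [Field k] [LinearOrder ι] {𝓜 : Submodule k (ι → k⟦X⟧)}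

theorem span_eq_top_of_forall_exists_triangular [Fintype ι]
    (h : ∀ i, ∃ y ∈ 𝓜, constantCoeff (y i) ≠ 0 ∧ ∀ j < i, constantCoeff (y j) = 0) :
    Submodule.span k⟦X⟧ (𝓜 : Set (ι → k⟦X⟧)) = ⊤ := by
  choose y hy hdiag hlow using h
  have hdet : IsUnit (Matrix.of y).det := by
    rw [isUnit_iff_constantCoeff, RingHom.map_det, RingHom.mapMatrix_apply,
      det_of_isUpperTriangular (M := (Matrix.of y).map constantCoeff) hlow]
    exact isUnit_iff_ne_zero.2 (Finset.prod_ne_zero_iff.2 fun i _ => hdiag i)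
  exact eq_top_mono (Submodule.span_mono (Set.range_subset_iff.2 hy))
    (span_range_row_eq_top_of_isUnit_det hdet)

theorem exists_triangular_of_forall_exists_coeff_zero_eq [DecidableEq ι]
    (h : ∀ v : ι → k⟦X⟧, ∃ y ∈ 𝓜, ∀ i, coeff 0 (y i) = coeff 0 (v i)) (i : ι) :
    ∃ y ∈ 𝓜, constantCoeff (y i) ≠ 0 ∧ ∀ j < i, constantCoeff (y j) = 0 := by
  obtain ⟨y, hy, hcoeff⟩ := h (Pi.single i 1)
  simp only [← coeff_zero_eq_constantCoeff_apply]
  exact ⟨y, hy, by simp [hcoeff], fun j hj => by simp [hcoeff, hj.ne]⟩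

end Triangular

theorem hasOrd_zero_iff {k : Type*} [Semiring k] {f : k⟦X⟧} :
    HasOrd f 0 ↔ constantCoeff f ≠ 0 := by
  simp [HasOrd, coeff_zero_eq_constantCoeff_apply]

section CumulativeValuation

variable {k : Type*} [Semiring k] {rk : ℕ} {υ : Fin rk → ℝ}

theorem cumOrd_iff_of_validVal (hυ : ValidVal υ) (y : Fin rk → k⟦X⟧) (i : Fin rk) :
    CumOrd υ y (υ i) ↔ constantCoeff (y i) ≠ 0 ∧ ∀ j < i, constantCoeff (y j) = 0 := by
  -- the parameters lie in `[0, 1)`, so `n + υ j` can only reach `υ i` when `n = 0`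
  have hbound : ∀ j (n : ℕ), 0 < n → υ i < (n : ℝ) + υ j := fun j n hn => by
    have : (1 : ℝ) ≤ n := by exact_mod_cast hn
    linarith [(hυ.1 i).2, (hυ.1 j).1]
  constructor
  · rintro ⟨⟨j, n, hjn, heq⟩, hmin⟩
    obtain rfl : n = 0 := by
      by_contra hn
      exact (hbound j n (Nat.pos_of_ne_zero hn)).ne' heq
    obtain rfl : j = i := hυ.2.injective (by simpa using heq)
    refine ⟨hasOrd_zero_iff.1 hjn, fun l hl => not_not.1 fun hne => ?_⟩
    exact (hυ.2 hl).not_ge (by simpa using hmin l 0 (hasOrd_zero_iff.2 hne))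
  · rintro ⟨hi, hlow⟩
    refine ⟨⟨i, 0, hasOrd_zero_iff.2 hi, by simp⟩, fun j n hjn => ?_⟩
    rcases Nat.eq_zero_or_pos n with rfl | hn
    · have hij : i ≤ j := not_lt.1 fun hj => hasOrd_zero_iff.1 hjn (hlow j hj)
      simpa using hυ.2.monotone hij
    · exact (hbound j n hn).le

theorem zero_mem_deltaComp_iff (hυ : ValidVal υ) (S : Set (Fin rk → k⟦X⟧)) (i : Fin rk) :
    0 ∈ DeltaComp υ S i ↔ ∃ y ∈ S, constantCoeff (y i) ≠ 0 ∧ ∀ j < i, constantCoeff (y j) = 0 := by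
  simp only [DeltaComp, Set.mem_ofPred_eq, Nat.cast_zero, zero_add, cumOrd_iff_of_validVal hυ]

end CumulativeValuation

theorem validVal_div_succ (rk : ℕ) : ValidVal fun i : Fin rk => (i : ℝ) / (i + 1) := by
  refine ⟨fun i => ⟨by positivity, (div_lt_one (by positivity)).2 (by linarith)⟩, fun i j hij => ?_⟩
  have hij : (i : ℝ) < j := by exact_mod_cast hij
  rw [div_lt_div_iff₀ (by positivity) (by positivity)]
  linarith

theorem standard_module_tfae_general
    {k : Type*} [Field k]
    (rk : ℕ)
    (𝓜 : Submodule k (Fin rk → PowerSeries k)) :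
    ((Submodule.span (PowerSeries k) (𝓜 : Set (Fin rk → PowerSeries k)) = ⊤) ↔
        (∀ v : Fin rk → PowerSeries k, ∃ y ∈ 𝓜, ∀ i,
          PowerSeries.coeff 0 (y i) = PowerSeries.coeff 0 (v i))) ∧
    ((Submodule.span (PowerSeries k) (𝓜 : Set (Fin rk → PowerSeries k)) = ⊤) ↔
        (∀ υ : Fin rk → ℝ, ValidVal υ → ∀ i : Fin rk,
          0 ∈ DeltaComp υ (𝓜 : Set (Fin rk → PowerSeries k)) i)) ∧
    ((∃ υ : Fin rk → ℝ, ValidVal υ ∧ ∀ i : Fin rk,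
          0 ∈ DeltaComp υ (𝓜 : Set (Fin rk → PowerSeries k)) i) →
        (∀ υ : Fin rk → ℝ, ValidVal υ → ∀ i : Fin rk,
          0 ∈ DeltaComp υ (𝓜 : Set (Fin rk → PowerSeries k)) i)) := by
  have hab : Submodule.span k⟦X⟧ (𝓜 : Set (Fin rk → k⟦X⟧)) = ⊤ ↔
      ∀ v : Fin rk → k⟦X⟧, ∃ y ∈ 𝓜, ∀ i, coeff 0 (y i) = coeff 0 (v i) :=
    ⟨fun h v => exists_mem_coeff_zero_eq_of_mem_span (h ▸ Submodule.mem_top),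
      fun h => span_eq_top_of_forall_exists_triangular
        (exists_triangular_of_forall_exists_coeff_zero_eq h)⟩
  have hac : ∀ υ : Fin rk → ℝ, ValidVal υ →
      (Submodule.span k⟦X⟧ (𝓜 : Set (Fin rk → k⟦X⟧)) = ⊤ ↔
        ∀ i, 0 ∈ DeltaComp υ (𝓜 : Set (Fin rk → k⟦X⟧)) i) := fun υ hυ => by
    simp only [zero_mem_deltaComp_iff hυ, SetLike.mem_coe]
    exact ⟨fun h => exists_triangular_of_forall_exists_coeff_zero_eq (hab.1 h),
      span_eq_top_of_forall_exists_triangular⟩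
  refine ⟨hab, ⟨fun h υ hυ => (hac υ hυ).1 h,
    fun h => (hac _ (validVal_div_succ rk)).2 (h _ (validVal_div_succ rk))⟩, ?_⟩
  rintro ⟨υ, hυ, h⟩ υ' hυ'
  exact (hac υ' hυ').1 ((hac υ hυ).2 h)

/-- For an `R`-submodule `𝓜 ⊆ O^{rk}`, the following are equivalent:
(a) the `O`-submodule generated by `𝓜` is all of `O^{rk}`;
(b) the image of `𝓜` in `O^{rk}/z·O^{rk}` spans it;
(c) for every admissible choice of valuation parameters and every `i`, `0 ∈ Δ^{(i)}(𝓜)`.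
Moreover (c) for one choice of the parameters implies (c) for every choice. -/
theorem standard_module_tfae
    {k : Type*} [Field k]
    (R : Subalgebra k (PowerSeries k)) (m : ℕ) (hm : 1 ≤ m)
    (hRm : ∀ f : PowerSeries k, PowerSeries.X ^ m * f ∈ R)
    (rk : ℕ) (hrk : 1 ≤ rk)
    (𝓜 : Submodule k (Fin rk → PowerSeries k))
    (hstab : ∀ r ∈ R, ∀ y ∈ 𝓜, (fun i => r * y i) ∈ 𝓜) :
    ((Submodule.span (PowerSeries k) (𝓜 : Set (Fin rk → PowerSeries k)) = ⊤) ↔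
        (∀ v : Fin rk → PowerSeries k, ∃ y ∈ 𝓜, ∀ i,
          PowerSeries.coeff 0 (y i) = PowerSeries.coeff 0 (v i))) ∧
    ((Submodule.span (PowerSeries k) (𝓜 : Set (Fin rk → PowerSeries k)) = ⊤) ↔
        (∀ υ : Fin rk → ℝ, ValidVal υ → ∀ i : Fin rk,
          0 ∈ DeltaComp υ (𝓜 : Set (Fin rk → PowerSeries k)) i)) ∧
    ((∃ υ : Fin rk → ℝ, ValidVal υ ∧ ∀ i : Fin rk,
          0 ∈ DeltaComp υ (𝓜 : Set (Fin rk → PowerSeries k)) i) →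
        (∀ υ : Fin rk → ℝ, ValidVal υ → ∀ i : Fin rk,
          0 ∈ DeltaComp υ (𝓜 : Set (Fin rk → PowerSeries k)) i)) :=
  standard_module_tfae_general rk 𝓜
end

section
/- Let 𝓜 ⊆ O^{rk} be an R-submodule with K·𝓜 = K^{rk}. Given scalars c_i^j ∈ k for all pairs j > i, set ε̂_i = ε_i + Σ_{j>i} c_i^j ε_j (a lower-triangular unipotent substitution) and let 𝓜̂ = {Σ_i (y, ε_i)·ε̂_i : y ∈ 𝓜}, where (y, ε_i) denotes the i-th coordinate of y in the standard basis. Then Δ^{(i)}(𝓜̂) = Δ^{(i)}(𝓜) for every 0 ≤ i ≤ rk−1. -/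
open PowerSeries

/-! The cumulative valuation of `y` is the least element of `{n + υ i | coeff n (y i) ≠ 0}`.
The substitution changes the degree-`n` coefficient of coordinate `j` only through degree-`n`
coefficients of coordinates `i < j`, which carry the strictly smaller values `n + υ i`.
Hence the substitution preserves the lower bounds of this set (by induction on `j`) and the
coefficients at which a lower bound is attained, so it preserves the least element. -/

namespace CumulativeValuation

variable {k : Type*} [Semiring k] {rk : ℕ}

def valueSet (υ : Fin rk → ℝ) (y : Fin rk → PowerSeries k) : Set ℝ :=
  {x | ∃ (i : Fin rk) (n : ℕ), coeff n (y i) ≠ 0 ∧ (n : ℝ) + υ i = x}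

theorem cumOrd_iff_isLeast {υ : Fin rk → ℝ} {y : Fin rk → PowerSeries k} {v : ℝ} :
    CumOrd υ y v ↔ IsLeast (valueSet υ y) v := by
  classical
  constructor
  · rintro ⟨⟨i, n, hn, rfl⟩, hlow⟩
    refine ⟨⟨i, n, hn.1, rfl⟩, ?_⟩
    rintro _ ⟨j, p, hp, rfl⟩
    have hex : ∃ q, coeff q (y j) ≠ 0 := ⟨p, hp⟩
    calc (n : ℝ) + υ i ≤ (Nat.find hex : ℝ) + υ j :=
        hlow j _ ⟨Nat.find_spec hex, fun _ hq => not_not.mp (Nat.find_min hex hq)⟩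
      _ ≤ p + υ j := by gcongr; exact Nat.find_min' hex hp
  · rintro ⟨⟨i, n, hn, rfl⟩, hlow⟩
    refine ⟨⟨i, n, ⟨hn, fun p hp => ?_⟩, rfl⟩, fun j p hp => hlow ⟨j, p, hp.1, rfl⟩⟩
    by_contra hne
    have hle := hlow ⟨i, p, hne, rfl⟩
    have hpn : (p : ℝ) < n := by exact_mod_cast hp
    linarith

lemma mem_lowerBounds_valueSet {υ : Fin rk → ℝ} {y : Fin rk → PowerSeries k} {v : ℝ} :
    v ∈ lowerBounds (valueSet υ y) ↔
      ∀ i (n : ℕ), (n : ℝ) + υ i < v → coeff n (y i) = 0 := by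
  constructor
  · intro h i n hlt
    by_contra hne
    exact (h ⟨i, n, hne, rfl⟩).not_gt hlt
  · rintro h _ ⟨i, n, hn, rfl⟩
    by_contra hlt
    exact hn (h i n (not_le.mp hlt))

noncomputable def lowerUnitriangularSubst (c : Fin rk → Fin rk → k)
    (y : Fin rk → PowerSeries k) : Fin rk → PowerSeries k :=
  fun j => y j + ∑ i : Fin rk, if i < j then c i j • y i else 0

lemma coeff_lowerUnitriangularSubst_of_forall_lt (c : Fin rk → Fin rk → k)
    {y : Fin rk → PowerSeries k} {j : Fin rk} {n : ℕ} (h : ∀ i < j, coeff n (y i) = 0) :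
    coeff n (lowerUnitriangularSubst c y j) = coeff n (y j) := by
  rw [lowerUnitriangularSubst, map_add, map_sum, Finset.sum_eq_zero fun i _ => ?_, add_zero]
  split_ifs with hij
  · rw [coeff_smul, h i hij, smul_zero]
  · exact map_zero _

variable {υ : Fin rk → ℝ} {y : Fin rk → PowerSeries k}

theorem lowerBounds_valueSet_lowerUnitriangularSubst (hυ : Monotone υ)
    (c : Fin rk → Fin rk → k) :
    lowerBounds (valueSet υ (lowerUnitriangularSubst c y)) = lowerBounds (valueSet υ y) := by
  have below {i j : Fin rk} {n : ℕ} {v : ℝ} (hij : i ≤ j) (hlt : (n : ℝ) + υ j < v) :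
      (n : ℝ) + υ i < v :=
    (show (n : ℝ) + υ i ≤ n + υ j by gcongr; exact hυ hij).trans_lt hlt
  ext v
  rw [mem_lowerBounds_valueSet, mem_lowerBounds_valueSet]
  constructor
  · intro hz j
    induction j using WellFoundedLT.induction with
    | ind j ih =>
      intro n hlt
      rw [← coeff_lowerUnitriangularSubst_of_forall_lt c
        fun i hij => ih i hij n (below hij.le hlt)]
      exact hz j n hlt
  · intro hy j n hlt
    rw [coeff_lowerUnitriangularSubst_of_forall_lt c fun i hij => hy i n (below hij.le hlt)]
    exact hy j n hlt

lemma coeff_lowerUnitriangularSubst_of_mem_lowerBounds (hυ : StrictMono υ)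
    (c : Fin rk → Fin rk → k) {v : ℝ} (hv : v ∈ lowerBounds (valueSet υ y)) {j : Fin rk}
    {n : ℕ} (hjn : (n : ℝ) + υ j = v) :
    coeff n (lowerUnitriangularSubst c y j) = coeff n (y j) :=
  coeff_lowerUnitriangularSubst_of_forall_lt c fun i hij =>
    mem_lowerBounds_valueSet.mp hv i n (hjn ▸ by gcongr; exact hυ hij)

theorem isLeast_valueSet_lowerUnitriangularSubst_iff (hυ : StrictMono υ)
    (c : Fin rk → Fin rk → k) {v : ℝ} :
    IsLeast (valueSet υ (lowerUnitriangularSubst c y)) v ↔ IsLeast (valueSet υ y) v := by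
  rw [IsLeast, IsLeast, lowerBounds_valueSet_lowerUnitriangularSubst hυ.monotone c]
  refine and_congr_left fun hv => ⟨?_, ?_⟩
  · rintro ⟨j, n, hn, hjn⟩
    rw [coeff_lowerUnitriangularSubst_of_mem_lowerBounds hυ c hv hjn] at hn
    exact ⟨j, n, hn, hjn⟩
  · rintro ⟨j, n, hn, hjn⟩
    exact ⟨j, n, by rwa [coeff_lowerUnitriangularSubst_of_mem_lowerBounds hυ c hv hjn], hjn⟩

theorem deltaComp_image_lowerUnitriangularSubst (hυ : StrictMono υ) (c : Fin rk → Fin rk → k)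
    (S : Set (Fin rk → PowerSeries k)) (i : Fin rk) :
    DeltaComp υ (lowerUnitriangularSubst c '' S) i = DeltaComp υ S i := by
  ext a
  simp only [DeltaComp, Set.exists_mem_image, cumOrd_iff_isLeast,
    isLeast_valueSet_lowerUnitriangularSubst_iff hυ c]

end CumulativeValuation

theorem lower_triangular_substitution_preserves_components_general
    {k : Type*} [Field k]
    (rk : ℕ)
    (υ : Fin rk → ℝ) (hυ : ValidVal υ)
    (𝓜 : Submodule k (Fin rk → PowerSeries k))
    (c : Fin rk → Fin rk → k) :
    ∀ i : Fin rk,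
      DeltaComp υ
        ((fun y : Fin rk → PowerSeries k => fun j : Fin rk =>
            y j + ∑ i' : Fin rk, if i' < j then c i' j • y i' else 0) ''
          (𝓜 : Set (Fin rk → PowerSeries k))) i
      = DeltaComp υ (𝓜 : Set (Fin rk → PowerSeries k)) i :=
  CumulativeValuation.deltaComp_image_lowerUnitriangularSubst hυ.2 c _

/-- Let `𝓜 ⊆ O^{rk}` be an `R`-submodule with `K·𝓜 = K^{rk}`.
Lower-triangular unipotent substitutions `ε̂_i = ε_i + Σ_{j>i} c_i^j ε_j` do not change the
components: `Δ^{(i)}(𝓜̂) = Δ^{(i)}(𝓜)` for all `i`, where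
`𝓜̂ = {Σ_i (y,ε_i)·ε̂_i | y ∈ 𝓜}`. -/
theorem lower_triangular_substitution_preserves_components
    {k : Type*} [Field k]
    (R : Subalgebra k (PowerSeries k)) (m : ℕ) (hm : 1 ≤ m)
    (hRm : ∀ f : PowerSeries k, PowerSeries.X ^ m * f ∈ R)
    (rk : ℕ) (hrk : 1 ≤ rk)
    (υ : Fin rk → ℝ) (hυ : ValidVal υ)
    (𝓜 : Submodule k (Fin rk → PowerSeries k))
    (hstab : ∀ r ∈ R, ∀ y ∈ 𝓜, (fun i => r * y i) ∈ 𝓜)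
    (hfull : Submodule.span (LaurentSeries k)
        ((fun y : Fin rk → PowerSeries k => fun i : Fin rk =>
            (HahnSeries.ofPowerSeries ℤ k) (y i)) ''
          (𝓜 : Set (Fin rk → PowerSeries k))) = ⊤)
    (c : Fin rk → Fin rk → k) :
    ∀ i : Fin rk,
      DeltaComp υ
        ((fun y : Fin rk → PowerSeries k => fun j : Fin rk =>
            y j + ∑ i' : Fin rk, if i' < j then c i' j • y i' else 0) ''
          (𝓜 : Set (Fin rk → PowerSeries k))) i
      = DeltaComp υ (𝓜 : Set (Fin rk → PowerSeries k)) i :=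
  lower_triangular_substitution_preserves_components_general rk υ hυ 𝓜 c
end

section
/- Assume the value semigroup Γ = ν(R \ {0}) is symmetric, i.e. c = 2δ. Let 𝓜 ⊆ O^{rk} be a standard R-submodule, set dev(𝓜) = rk·δ − dim_k(O^{rk}/𝓜), and let C(𝓜) = {y ∈ 𝓜 : O·y ⊆ 𝓜} be its conductor. Suppose (ε'_0, …, ε'_{rk−1}) is an O-basis of O^{rk} and n_0 ≤ n_1 ≤ … ≤ n_{rk−1} are natural numbers with C(𝓜) = ⊕_{i} z^{n_i}·O·ε'_i. Then rk·c ≥ dev(𝓜) + Σ_{i=0}^{rk−1} n_i, and moreover n_i ≤ c for every i. -/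
open PowerSeries

/-!
After the change of basis `ε'`, the conductor of `𝓜` is `⊕ᵢ z^{nᵢ}·O`, so
`Σ nᵢ = dim O^{rk}/C(𝓜) = dim O^{rk}/𝓜 + dim 𝓜/C(𝓜)`. The coefficients at the `rk·δ`
positions `(i, t)` with `t < nᵢ` and `nᵢ - 1 - t ∉ Γ` already detect `𝓜/C(𝓜)`, so
`Σ nᵢ ≤ dim O^{rk}/𝓜 + rk·δ`, which is the claimed inequality once `c = 2δ`. Since `z^c·O ⊆ R`
and `𝓜` generates `O^{rk}`, also `z^c·O^{rk} ⊆ C(𝓜)`, whence `nᵢ ≤ c`.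
-/

theorem finrank_le_finrank_quotient_add {K V U W : Type*} [Field K] [AddCommGroup V] [Module K V]
    [AddCommGroup U] [Module K U] [FiniteDimensional K U] [AddCommGroup W] [Module K W]
    [FiniteDimensional K W] {q : V →ₗ[K] U} (hq : Function.Surjective q) {N : Submodule K V}
    (hqN : LinearMap.ker q ≤ N) (Θ : V →ₗ[K] W) (hΘ : N ⊓ LinearMap.ker Θ ≤ LinearMap.ker q) :
    Module.finrank K U ≤ Module.finrank K (V ⧸ N) + Module.finrank K W := by
  let φ := N.mkQ.prod Θ
  have hφ : LinearMap.ker φ ≤ LinearMap.ker q := by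
    rwa [LinearMap.ker_prod, Submodule.ker_mkQ]
  have : FiniteDimensional K (V ⧸ LinearMap.ker q) :=
    Module.Finite.equiv (q.quotKerEquivOfSurjective hq).symm
  have : FiniteDimensional K (V ⧸ N) :=
    Module.Finite.of_surjective _ (Submodule.factor_surjective hqN)
  have : FiniteDimensional K (V ⧸ LinearMap.ker φ) := Module.Finite.equiv φ.quotKerEquivRange.symm
  calc Module.finrank K U = Module.finrank K (V ⧸ LinearMap.ker q) :=
        (q.quotKerEquivOfSurjective hq).finrank_eq.symm
    _ ≤ Module.finrank K (V ⧸ LinearMap.ker φ) :=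
        LinearMap.finrank_le_finrank_of_surjective (Submodule.factor_surjective hφ)
    _ = Module.finrank K (LinearMap.range φ) := φ.quotKerEquivRange.finrank_eq
    _ ≤ Module.finrank K ((V ⧸ N) × W) := Submodule.finrank_le _
    _ = Module.finrank K (V ⧸ N) + Module.finrank K W := Module.finrank_prod

section

variable {k : Type*} [Field k]

section ValueSemigroup

variable {R : Subalgebra k k⟦X⟧}

theorem mem_valSet_of_le {m t : ℕ} (hRm : ∀ f : k⟦X⟧, X ^ m * f ∈ R) (hmt : m ≤ t) :
    t ∈ ValSet (R : Set k⟦X⟧) :=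
  ⟨X ^ t, by rw [← Nat.add_sub_cancel' hmt, pow_add]; exact hRm _,
    order_eq_nat.1 (order_X_pow t)⟩

theorem exists_X_pow_mul_eq_C_mul_add {r : k⟦X⟧} {t : ℕ} (hr : HasOrd r t) (f : k⟦X⟧) :
    ∃ (a : k) (g : k⟦X⟧), X ^ t * f = C a * r + X ^ (t + 1) * g := by
  refine ⟨coeff 0 f / coeff t r, ?_⟩
  obtain ⟨g, hg⟩ : X ^ (t + 1) ∣ X ^ t * f - C (coeff 0 f / coeff t r) * r := by
    refine X_pow_dvd_iff.2 fun j hj => ?_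
    rcases (Nat.lt_succ_iff.1 hj).lt_or_eq with hjt | rfl
    · simp [coeff_X_pow_mul', hjt.not_ge, hr.2 j hjt]
    · simp [coeff_X_pow_mul', hr.1]
  exact ⟨g, by linear_combination hg⟩

theorem X_pow_mul_mem_of_forall_mem_valSet_s15 {c m : ℕ}
    (hc : ∀ t, c ≤ t → t ∈ ValSet (R : Set k⟦X⟧)) (hRm : ∀ f : k⟦X⟧, X ^ m * f ∈ R)
    (f : k⟦X⟧) : X ^ c * f ∈ R := by
  suffices h : ∀ d t, c ≤ t → m ≤ t + d → ∀ f : k⟦X⟧, X ^ t * f ∈ R from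
    h m c le_rfl (by omega) f
  intro d
  induction d with
  | zero =>
    intro t _ hmt f
    rw [← Nat.add_sub_cancel' (show m ≤ t by omega), pow_add, mul_assoc]
    exact hRm _
  | succ d ih =>
    intro t hct hmt f
    obtain ⟨r, hrR, hr⟩ := hc t hct
    obtain ⟨a, g, hfg⟩ := exists_X_pow_mul_eq_C_mul_add hr f
    rw [hfg]
    exact add_mem (R.mul_mem (R.algebraMap_mem a) hrR) (ih (t + 1) (by omega) (by omega) g)

end ValueSemigroup

section Conductor

variable {M : Type*} [AddCommGroup M] [Module k⟦X⟧ M] [Module k M]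

/-- The conductor `C(N) = {y | O·y ⊆ N}`, the largest `O`-submodule contained in `N`. -/
def Submodule.conductor (N : Submodule k M) : Submodule k⟦X⟧ M where
  carrier := {y | ∀ f : k⟦X⟧, f • y ∈ N}
  add_mem' hx hy f := by simpa only [smul_add] using N.add_mem (hx f) (hy f)
  zero_mem' f := by simp
  smul_mem' g y hy f := by simpa only [smul_smul] using hy (f * g)

theorem Submodule.mem_conductor {N : Submodule k M} {y : M} :
    y ∈ N.conductor ↔ ∀ f : k⟦X⟧, f • y ∈ N :=
  Iff.rfl

theorem Submodule.mem_conductor_iff_mem_and {N : Submodule k M} {y : M} :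
    y ∈ N.conductor ↔ y ∈ N ∧ ∀ f : k⟦X⟧, f • y ∈ N :=
  ⟨fun h => ⟨by simpa using h 1, h⟩, And.right⟩

theorem Submodule.conductor_le [IsScalarTower k k⟦X⟧ M] (N : Submodule k M) :
    N.conductor.restrictScalars k ≤ N :=
  fun y hy => by simpa using hy 1

/-- Because `O = k ⊕ z·O`, it suffices that `z·y ∈ C(N)`. -/
theorem Submodule.mem_conductor_of_X_smul_mem [IsScalarTower k k⟦X⟧ M] {N : Submodule k M}
    {y : M} (hy : y ∈ N) (hXy : (X : k⟦X⟧) • y ∈ N.conductor) : y ∈ N.conductor := by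
  intro f
  obtain ⟨g, hg⟩ : X ∣ f - C (constantCoeff f) := X_dvd_iff.2 (by simp)
  rw [show f = C (constantCoeff f) + g * X by linear_combination hg,
    add_smul, ← algebraMap_eq, algebraMap_smul, mul_smul]
  exact N.add_mem (N.smul_mem _ hy) (hXy g)

theorem Submodule.X_pow_smul_mem_conductor {R : Subalgebra k k⟦X⟧} {N : Submodule k M} {c : ℕ}
    (hstab : ∀ r ∈ R, ∀ y ∈ N, r • y ∈ N) (hspan : Submodule.span k⟦X⟧ (N : Set M) = ⊤)
    (hXc : ∀ f : k⟦X⟧, X ^ c * f ∈ R) (v : M) : (X : k⟦X⟧) ^ c • v ∈ N.conductor := by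
  have hv : v ∈ Submodule.span k⟦X⟧ (N : Set M) := hspan ▸ Submodule.mem_top
  induction hv using Submodule.span_induction with
  | mem y hy => exact fun f => by rw [smul_smul, mul_comm]; exact hstab _ (hXc f) y hy
  | zero => simp
  | add y z _ _ hy hz => simpa only [smul_add] using add_mem hy hz
  | smul a y _ hy => simpa only [smul_comm _ a] using Submodule.smul_mem _ a hy

theorem Submodule.conductor_comap [IsScalarTower k k⟦X⟧ M] {M' : Type*} [AddCommGroup M']
    [Module k⟦X⟧ M'] [Module k M'] [IsScalarTower k k⟦X⟧ M'] (e : M ≃ₗ[k⟦X⟧] M')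
    (N : Submodule k M') :
    (N.comap (e.restrictScalars k : M →ₗ[k] M')).conductor =
      N.conductor.comap (e : M →ₗ[k⟦X⟧] M') := by
  ext y
  simp [Submodule.mem_conductor]

end Conductor

section Coordinates

variable {rk : ℕ}

noncomputable def powDiag (n : Fin rk → ℕ) : Submodule k⟦X⟧ (Fin rk → k⟦X⟧) :=
  Submodule.pi Set.univ fun i => Ideal.span {X ^ n i}

variable {n : Fin rk → ℕ}

theorem mem_powDiag {a : Fin rk → k⟦X⟧} : a ∈ powDiag n ↔ ∀ i, X ^ n i ∣ a i := by
  simp [powDiag, Submodule.mem_pi, Ideal.mem_span_singleton]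

theorem mem_powDiag_iff_exists {a : Fin rk → k⟦X⟧} :
    a ∈ powDiag n ↔ ∃ b : Fin rk → k⟦X⟧, a = fun i => X ^ n i * b i := by
  simp only [mem_powDiag, Dvd.dvd, funext_iff, Classical.skolem]

theorem le_of_forall_X_pow_smul_mem_powDiag {c : ℕ}
    (h : ∀ v : Fin rk → k⟦X⟧, (X : k⟦X⟧) ^ c • v ∈ powDiag n) (i : Fin rk) : n i ≤ c := by
  by_contra! hlt
  simpa using X_pow_dvd_iff.1 (mem_powDiag.1 (h (Pi.single i 1)) i) c hlt

variable (n) in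
noncomputable def coeffsBelow : (Fin rk → k⟦X⟧) →ₗ[k] ∀ i, Fin (n i) → k :=
  LinearMap.pi fun i => LinearMap.pi fun j => (coeff (j : ℕ)).comp (LinearMap.proj i)

theorem coeffsBelow_apply (a : Fin rk → k⟦X⟧) (i : Fin rk) (j : Fin (n i)) :
    coeffsBelow n a i j = coeff j (a i) :=
  rfl

theorem mem_ker_coeffsBelow {a : Fin rk → k⟦X⟧} :
    a ∈ LinearMap.ker (coeffsBelow n) ↔ a ∈ powDiag n := by
  simp [funext_iff, coeffsBelow_apply, mem_powDiag, X_pow_dvd_iff, Fin.forall_iff]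

theorem coeffsBelow_surjective : Function.Surjective (coeffsBelow (k := k) n) := fun w =>
  ⟨fun i => mk fun t => if h : t < n i then w i ⟨t, h⟩ else 0, by
    ext i j
    simp [coeffsBelow_apply, coeff_mk]⟩

/-- Otherwise take a nonzero coefficient `x_{i,t}`, `t < n i`, with `n i - t` maximal. Then
`n i - 1 - t` is the order of some `r ∈ R`; every coordinate of `r • x` is divisible by
`z^(n l - 1)`, so `z • r • x ∈ C(N)` and hence `r • x ∈ C(N)`, although `(r • x) i` has order
`n i - 1`. -/
theorem mem_powDiag_of_coeff_eq_zero {R : Subalgebra k k⟦X⟧} {N : Submodule k (Fin rk → k⟦X⟧)}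
    (hstab : ∀ r ∈ R, ∀ y ∈ N, r • y ∈ N) (hC : N.conductor = powDiag n)
    {x : Fin rk → k⟦X⟧} (hx : x ∈ N)
    (hgap : ∀ i t, t < n i → n i - 1 - t ∉ ValSet (R : Set k⟦X⟧) → coeff t (x i) = 0) :
    x ∈ powDiag n := by
  classical
  by_contra hxD
  obtain ⟨i₀, t₀, ht₀, hct₀⟩ : ∃ i t, t < n i ∧ coeff t (x i) ≠ 0 := by
    simpa [mem_powDiag, X_pow_dvd_iff] using hxD
  let S := (Finset.univ ×ˢ Finset.range (Finset.univ.sup n)).filter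
    fun p : Fin rk × ℕ => p.2 < n p.1 ∧ coeff p.2 (x p.1) ≠ 0
  have hS : ∀ {l b}, b < n l → coeff b (x l) ≠ 0 → (l, b) ∈ S := fun hb hcb => by
    simp [S, hb, hcb, hb.trans_le (Finset.le_sup (Finset.mem_univ _))]
  obtain ⟨⟨i, t⟩, hit, hmax⟩ := S.exists_max_image (fun p => n p.1 - p.2) ⟨_, hS ht₀ hct₀⟩
  obtain ⟨hti, hct⟩ : t < n i ∧ coeff t (x i) ≠ 0 := (Finset.mem_filter.1 hit).2
  have hvanish : ∀ l b, n i - t < n l - b → coeff b (x l) = 0 := fun l b h =>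
    by_contra fun hb => (hmax _ (hS (by omega) hb)).not_gt h
  obtain ⟨r, hrR, hr⟩ : n i - 1 - t ∈ ValSet (R : Set k⟦X⟧) :=
    by_contra fun hγ => hct (hgap i t hti hγ)
  have hrx : ∀ l, X ^ (n l - 1) ∣ r * x l := fun l => by
    have hxl : X ^ (n l - (n i - t)) ∣ x l := X_pow_dvd_iff.2 fun b hb => hvanish l b (by omega)
    have hXr : X ^ (n i - 1 - t) ∣ r := X_pow_dvd_iff.2 hr.2
    have := mul_dvd_mul hXr hxl
    rw [← pow_add] at this
    exact (pow_dvd_pow X (by omega)).trans this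
  have hXrx : (X : k⟦X⟧) • r • x ∈ N.conductor := hC ▸ mem_powDiag.2 fun l => by
    have := mul_dvd_mul_left (X : k⟦X⟧) (hrx l)
    rw [← pow_succ'] at this
    exact (pow_dvd_pow X (by omega)).trans this
  have hrx_mem : r • x ∈ powDiag n :=
    hC ▸ Submodule.mem_conductor_of_X_smul_mem (hstab r hrR x hx) hXrx
  have hord : (r * x i).order = ↑(n i - 1) := by
    rw [order_mul, order_eq_nat.2 hr, order_eq_nat.2 ⟨hct, fun b hb => hvanish i b (by omega)⟩]
    norm_cast
    omega
  exact (order_eq_nat.1 hord).1 (X_pow_dvd_iff.1 (mem_powDiag.1 hrx_mem i) _ (by omega))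

end Coordinates

theorem sum_le_finrank_quotient_add_mul_ncard {rk : ℕ} {n : Fin rk → ℕ} {R : Subalgebra k k⟦X⟧}
    (hgaps : (ValSet (R : Set k⟦X⟧))ᶜ.Finite) {N : Submodule k (Fin rk → k⟦X⟧)}
    (hstab : ∀ r ∈ R, ∀ y ∈ N, r • y ∈ N) (hC : N.conductor = powDiag n) :
    ∑ i, n i ≤
      Module.finrank k ((Fin rk → k⟦X⟧) ⧸ N) + rk * (ValSet (R : Set k⟦X⟧))ᶜ.ncard := by
  have := hgaps.fintype
  let Θ : (Fin rk → k⟦X⟧) →ₗ[k] Fin rk × ↥(ValSet (R : Set k⟦X⟧))ᶜ → k :=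
    LinearMap.pi fun p => (coeff (n p.1 - 1 - p.2)).comp (LinearMap.proj p.1)
  have hker : LinearMap.ker (coeffsBelow n) ≤ N := fun a ha =>
    N.conductor_le (hC ▸ mem_ker_coeffsBelow.1 ha)
  have hΘ : N ⊓ LinearMap.ker Θ ≤ LinearMap.ker (coeffsBelow n) := by
    rintro x ⟨hxN, hxΘ⟩
    refine mem_ker_coeffsBelow.2
      (mem_powDiag_of_coeff_eq_zero hstab hC hxN fun i t hti hgap => ?_)
    have : coeff (n i - 1 - (n i - 1 - t)) (x i) = 0 := congrFun hxΘ (i, ⟨_, hgap⟩)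
    rwa [Nat.sub_sub_self (Nat.le_sub_one_of_lt hti)] at this
  calc ∑ i, n i = Module.finrank k (∀ i, Fin (n i) → k) := by
        simp [Module.finrank_pi_fintype]
    _ ≤ _ := finrank_le_finrank_quotient_add coeffsBelow_surjective hker Θ hΘ
    _ = _ := by simp

end

theorem higher_rank_conductor_inequality_general
    {k : Type*} [Field k]
    (R : Subalgebra k (PowerSeries k)) (m : ℕ)
    (hRm : ∀ f : PowerSeries k, PowerSeries.X ^ m * f ∈ R)
    (hsym : sInf {c : ℕ | ∀ n', c ≤ n' → n' ∈ ValSet (R : Set (PowerSeries k))}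
        = 2 * ((ValSet (R : Set (PowerSeries k)))ᶜ).ncard)
    (rk : ℕ)
    (𝓜 : Submodule k (Fin rk → PowerSeries k))
    (hstab : ∀ r ∈ R, ∀ y ∈ 𝓜, (fun i => r * y i) ∈ 𝓜)
    (hstd : Submodule.span (PowerSeries k) (𝓜 : Set (Fin rk → PowerSeries k)) = ⊤)
    (ε' : Fin rk → (Fin rk → PowerSeries k))
    (hbasis : Function.Bijective
      (fun a : Fin rk → PowerSeries k => ∑ i : Fin rk, a i • ε' i))
    (n : Fin rk → ℕ)
    (hcond : ∀ y : Fin rk → PowerSeries k,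
      (y ∈ 𝓜 ∧ ∀ f : PowerSeries k, (fun j => f * y j) ∈ 𝓜) ↔
        ∃ b : Fin rk → PowerSeries k,
          y = ∑ i : Fin rk, (PowerSeries.X ^ n i * b i) • ε' i) :
    (((rk : ℤ) * ((ValSet (R : Set (PowerSeries k)))ᶜ).ncard
          - (Module.finrank k ((Fin rk → PowerSeries k) ⧸ 𝓜) : ℤ))
        + ∑ i : Fin rk, (n i : ℤ))
      ≤ (rk : ℤ)
          * (sInf {c : ℕ | ∀ n', c ≤ n' → n' ∈ ValSet (R : Set (PowerSeries k))} : ℕ) ∧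
    ∀ i : Fin rk,
      n i ≤ sInf {c : ℕ | ∀ n', c ≤ n' → n' ∈ ValSet (R : Set (PowerSeries k))} := by
  set c := sInf {c : ℕ | ∀ n', c ≤ n' → n' ∈ ValSet (R : Set k⟦X⟧)}
  have hc : c ∈ {c : ℕ | ∀ t, c ≤ t → t ∈ ValSet (R : Set k⟦X⟧)} :=
    Nat.sInf_mem ⟨m, fun _ => mem_valSet_of_le hRm⟩
  have hXc := X_pow_mul_mem_of_forall_mem_valSet_s15 hc hRm
  let e := LinearEquiv.ofBijective (Fintype.linearCombination k⟦X⟧ ε') hbasis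
  let N := 𝓜.comap (e.restrictScalars k : (Fin rk → k⟦X⟧) →ₗ[k] Fin rk → k⟦X⟧)
  have hC : N.conductor = powDiag n := by
    ext a
    rw [Submodule.conductor_comap, Submodule.mem_comap, Submodule.mem_conductor_iff_mem_and,
      mem_powDiag_iff_exists]
    exact (hcond (e a)).trans (exists_congr fun b => e.injective.eq_iff' rfl)
  have hn : ∀ i, n i ≤ c := le_of_forall_X_pow_smul_mem_powDiag fun v => by
    rw [← hC, Submodule.conductor_comap, Submodule.mem_comap, map_smul]
    exact Submodule.X_pow_smul_mem_conductor hstab hstd hXc (e v)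
  have hstabN : ∀ r ∈ R, ∀ y ∈ N, r • y ∈ N := fun r hr y hy => by
    change e (r • y) ∈ 𝓜
    rw [map_smul]
    exact hstab r hr _ hy
  have hgaps : (ValSet (R : Set k⟦X⟧))ᶜ.Finite :=
    (Set.finite_Iio c).subset fun t ht => lt_of_not_ge fun h => ht (hc t h)
  have hsum := sum_le_finrank_quotient_add_mul_ncard hgaps hstabN hC
  rw [(Submodule.Quotient.equiv N 𝓜 (e.restrictScalars k)
    (Submodule.map_comap_eq_of_surjective (e.restrictScalars k).surjective 𝓜)).finrank_eq] at hsum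
  refine ⟨?_, hn⟩
  zify at hsum hsym
  rw [hsym]
  linarith

/-- Assume `Γ = ν(R \ {0})` is symmetric, i.e. `c = 2δ`.  Let
`𝓜 ⊆ O^{rk}` be a standard `R`-submodule with `dev(𝓜) = rk·δ - dim_k(O^{rk}/𝓜)`, and
suppose its conductor `C(𝓜) = {y ∈ 𝓜 | O·y ⊆ 𝓜}` equals `⊕_i z^{n_i}·O·ε'_i` for an
`O`-basis `(ε'_i)` of `O^{rk}` and `n_0 ≤ … ≤ n_{rk-1}`.  Then
`rk·c ≥ dev(𝓜) + Σ_i n_i`, and `n_i ≤ c` for every `i`. -/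
theorem higher_rank_conductor_inequality
    {k : Type*} [Field k]
    (R : Subalgebra k (PowerSeries k)) (m : ℕ) (hm : 1 ≤ m)
    (hRm : ∀ f : PowerSeries k, PowerSeries.X ^ m * f ∈ R)
    (hsym : sInf {c : ℕ | ∀ n', c ≤ n' → n' ∈ ValSet (R : Set (PowerSeries k))}
        = 2 * ((ValSet (R : Set (PowerSeries k)))ᶜ).ncard)
    (rk : ℕ) (hrk : 1 ≤ rk)
    (𝓜 : Submodule k (Fin rk → PowerSeries k))
    (hstab : ∀ r ∈ R, ∀ y ∈ 𝓜, (fun i => r * y i) ∈ 𝓜)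
    (hstd : Submodule.span (PowerSeries k) (𝓜 : Set (Fin rk → PowerSeries k)) = ⊤)
    (ε' : Fin rk → (Fin rk → PowerSeries k))
    (hbasis : Function.Bijective
      (fun a : Fin rk → PowerSeries k => ∑ i : Fin rk, a i • ε' i))
    (n : Fin rk → ℕ) (hmono : Monotone n)
    (hcond : ∀ y : Fin rk → PowerSeries k,
      (y ∈ 𝓜 ∧ ∀ f : PowerSeries k, (fun j => f * y j) ∈ 𝓜) ↔
        ∃ b : Fin rk → PowerSeries k,
          y = ∑ i : Fin rk, (PowerSeries.X ^ n i * b i) • ε' i) :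
    (((rk : ℤ) * ((ValSet (R : Set (PowerSeries k)))ᶜ).ncard
          - (Module.finrank k ((Fin rk → PowerSeries k) ⧸ 𝓜) : ℤ))
        + ∑ i : Fin rk, (n i : ℤ))
      ≤ (rk : ℤ)
          * (sInf {c : ℕ | ∀ n', c ≤ n' → n' ∈ ValSet (R : Set (PowerSeries k))} : ℕ) ∧
    ∀ i : Fin rk,
      n i ≤ sInf {c : ℕ | ∀ n', c ≤ n' → n' ∈ ValSet (R : Set (PowerSeries k))} :=
  higher_rank_conductor_inequality_general R m hRm hsym rk 𝓜 hstab hstd ε' hbasis n hcond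
end

section
/- Let p and q be coprime positive integers and Γ' = ℕp + ℕq. Let Δ ⊆ ℕ be a Γ'-module with 0 ∈ Δ. Then there exists a unique p-tuple (a_0, a_1, …, a_{p−1}) of natural numbers such that a_j ≡ jq (mod p) for every 0 ≤ j ≤ p−1 and Δ = ⋃_{j=0}^{p−1} (a_j + pℕ); moreover this union is disjoint. -/
/-- Let `p, q` be coprime positive integers, `Γ' = ℕp + ℕq`, and let
`Δ ⊆ ℕ` be a `Γ'`-module with `0 ∈ Δ`.  Then there is a unique `p`-tuple `(a_0, …, a_{p-1})`
of natural numbers with `a_j ≡ j·q (mod p)` and `Δ = ⋃_j (a_j + pℕ)`; moreover this union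
is disjoint. -/
theorem p_basis_exists_unique
    (p q : ℕ) (hp : 0 < p) (hq : 0 < q) (hpq : Nat.Coprime p q)
    (Δ : Set ℕ) (h0 : 0 ∈ Δ)
    (hmod : ∀ a b : ℕ, ∀ d ∈ Δ, a * p + b * q + d ∈ Δ) :
    (∃! a : Fin p → ℕ,
      (∀ j : Fin p, a j % p = ((j : ℕ) * q) % p) ∧
      Δ = ⋃ j : Fin p, {x | ∃ n : ℕ, x = a j + p * n}) ∧
    (∀ a : Fin p → ℕ,
      ((∀ j : Fin p, a j % p = ((j : ℕ) * q) % p) ∧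
        Δ = ⋃ j : Fin p, {x | ∃ n : ℕ, x = a j + p * n}) →
      ∀ j j' : Fin p, j ≠ j' →
        Disjoint {x | ∃ n : ℕ, x = a j + p * n} {x | ∃ n : ℕ, x = a j' + p * n}) := by
  -- cancellation / injectivity of j ↦ j*q mod p
  have hinj : ∀ j j' : Fin p, ((j : ℕ) * q) % p = ((j' : ℕ) * q) % p → j = j' := by
    intro j j' h
    have h' : (j : ℕ) ≡ (j' : ℕ) [MOD p] :=
      Nat.ModEq.cancel_right_of_coprime (by simpa [Nat.Coprime] using hpq) h
    have := h'
    unfold Nat.ModEq at this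
    rw [Nat.mod_eq_of_lt j.isLt, Nat.mod_eq_of_lt j'.isLt] at this
    exact Fin.ext this
  -- surjectivity
  have hsurj : ∀ x : ℕ, ∃ j : Fin p, ((j : ℕ) * q) % p = x % p := by
    have hs : Function.Surjective
        (fun j : Fin p => (⟨((j : ℕ) * q) % p, Nat.mod_lt _ hp⟩ : Fin p)) := by
      apply Finite.surjective_of_injective
      intro j j' h
      exact hinj j j' (by simpa using congrArg Fin.val h)
    intro x
    obtain ⟨j, hj⟩ := hs ⟨x % p, Nat.mod_lt _ hp⟩
    exact ⟨j, by simpa using congrArg Fin.val hj⟩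
  -- closure under adding multiples of p
  have hclos : ∀ d ∈ Δ, ∀ n : ℕ, d + p * n ∈ Δ := by
    intro d hd n
    have := hmod n 0 d hd
    simpa [mul_comm, add_comm] using this
  -- every residue class jq is inhabited in Δ
  have he : ∀ j : Fin p, ∃ x, x ∈ Δ ∧ x % p = ((j : ℕ) * q) % p := by
    intro j
    refine ⟨(j : ℕ) * q, ?_, rfl⟩
    have := hmod 0 (j : ℕ) 0 h0
    simpa using this
  classical
  set a₀ : Fin p → ℕ := fun j => Nat.find (he j) with ha₀
  have ha₀mem : ∀ j : Fin p, a₀ j ∈ Δ := fun j => (Nat.find_spec (he j)).1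
  have ha₀mod : ∀ j : Fin p, a₀ j % p = ((j : ℕ) * q) % p := fun j => (Nat.find_spec (he j)).2
  have ha₀min : ∀ j : Fin p, ∀ x ∈ Δ, x % p = ((j : ℕ) * q) % p → a₀ j ≤ x := by
    intro j x hx hx'
    exact Nat.find_min' (he j) ⟨hx, hx'⟩
  -- same residue + ≤ gives membership in arithmetic progression
  have harith : ∀ a x : ℕ, a ≤ x → x % p = a % p → ∃ n, x = a + p * n := by
    intro a x hle hmod'
    have : p ∣ x - a := (Nat.modEq_iff_dvd' hle).mp hmod'.symm
    obtain ⟨n, hn⟩ := this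
    exact ⟨n, by omega⟩
  have hΔ : Δ = ⋃ j : Fin p, {x | ∃ n : ℕ, x = a₀ j + p * n} := by
    ext x
    simp only [Set.mem_iUnion, Set.mem_setOf_eq]
    constructor
    · intro hx
      obtain ⟨j, hj⟩ := hsurj x
      refine ⟨j, harith _ _ (ha₀min j x hx hj.symm) ?_⟩
      rw [ha₀mod j, hj]
    · rintro ⟨j, n, rfl⟩
      exact hclos _ (ha₀mem j) n
  -- disjointness for any a with the residue property
  have hdisj : ∀ a : Fin p → ℕ,
      (∀ j : Fin p, a j % p = ((j : ℕ) * q) % p) →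
      ∀ j j' : Fin p, j ≠ j' →
        Disjoint {x | ∃ n : ℕ, x = a j + p * n} {x | ∃ n : ℕ, x = a j' + p * n} := by
    intro a hares j j' hne
    rw [Set.disjoint_left]
    rintro x ⟨n, rfl⟩ ⟨m, hm⟩
    apply hne
    apply hinj
    rw [← hares j, ← hares j']
    have h1 : (a j + p * n) % p = a j % p := Nat.add_mul_mod_self_left _ _ _
    have h2 : (a j' + p * m) % p = a j' % p := Nat.add_mul_mod_self_left _ _ _
    rw [← h1, ← h2, ← hm]
  refine ⟨⟨a₀, ⟨ha₀mod, hΔ⟩, ?_⟩, fun a ha => hdisj a ha.1⟩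
  -- uniqueness
  rintro a ⟨hares, haΔ⟩
  funext j
  -- a j ∈ Δ
  have hajΔ : a j ∈ Δ := by
    rw [haΔ]
    exact Set.mem_iUnion.mpr ⟨j, ⟨0, by ring⟩⟩
  have hle1 : a₀ j ≤ a j := ha₀min j (a j) hajΔ (hares j)
  -- a₀ j ∈ Δ hence in some class of a
  have : a₀ j ∈ ⋃ j' : Fin p, {x | ∃ n : ℕ, x = a j' + p * n} := by
    rw [← haΔ]; exact ha₀mem j
  obtain ⟨j', n, hn⟩ := by simpa [Set.mem_iUnion] using this
  have hjj' : j' = j := by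
    apply hinj
    rw [← hares j', ← ha₀mod j, hn]
    exact (Nat.add_mul_mod_self_left _ _ _).symm
  subst hjj'
  omega
end

section
/- Let k be a field and Δ a standard rank-rk Γ̃-module with p-basis b_{i,j} = rk·a_{i,j} + i (0 ≤ i ≤ rk−1, 0 ≤ j ≤ p−1). Let A ⊆ k[t] be the k-subalgebra spanned by the monomials t^γ with γ ∈ Γ̃ (equivalently, generated by t^{rk·p} and t^{rk·q}), and let φ : A^{rk·p} → k[t] be the A-linear map sending the standard basis vector e_{(i,j)} to t^{b_{i,j}} (so the image of φ is the A-submodule k[Δ] spanned by {t^d : d ∈ Δ}). Then the kernel of φ (the module of syzygies of the generators t^{b_{i,j}} of k[Δ]) admits a minimal generating set consisting entirely of vectors with exactly two nonzero coordinates of the form t^{γ}·e_{(i,j)} − t^{γ'}·e_{(u,v)} with γ, γ' ∈ Γ̃. -/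
open PowerSeries

set_option synthInstance.maxHeartbeats 1000000

/-- `Γ̃ = rk·(ℕp + ℕq)`. -/
def GammaT (rk p q : ℕ) : Set ℕ := {x | ∃ a b : ℕ, x = rk * (a * p + b * q)}

/-- The gap counting function `γ_Δ(b) = |[b,∞) \ Δ|`. -/
noncomputable def gapCount (Δ : Set ℕ) (b : ℕ) : ℕ := {x : ℕ | b ≤ x ∧ x ∉ Δ}.ncard

/-- The element `r` of `k[[t]]` lies in `R`, the image of `k[[z^p, z^q]]` under `z = t^rk`,
i.e. its support lies in `Γ̃ = rk·(ℕp + ℕq)`. -/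
def InTorusRing {k : Type*} [Semiring k] (rk p q : ℕ) (r : PowerSeries k) : Prop :=
  ∀ n : ℕ, n ∉ GammaT rk p q → PowerSeries.coeff n r = 0

/-- `(a i j)` is the `p`-basis data of the standard rank-`rk` `Γ̃`-module `Δ`:
`a i j` is the least natural number `a` with `rk·a + i ∈ Δ` and `a ≡ j·q (mod p)`. -/
def IsPBasis (rk p q : ℕ) (Δ : Set ℕ) (a : ℕ → ℕ → ℕ) : Prop :=
  ∀ i < rk, ∀ j < p,
    rk * a i j + i ∈ Δ ∧ a i j % p = (j * q) % p ∧
    ∀ a' : ℕ, rk * a' + i ∈ Δ → a' % p = (j * q) % p → a i j ≤ a'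

/-- The subalgebra `A = k[t^{rk·p}, t^{rk·q}] ⊆ k[t]`, i.e. the span of the monomials
`t^γ` with `γ ∈ Γ̃`. -/
noncomputable def torusAlg (k : Type*) [Field k] (rk p q : ℕ) : Subalgebra k (Polynomial k) :=
  Algebra.adjoin k ({Polynomial.X ^ (rk * p), Polynomial.X ^ (rk * q)} : Set (Polynomial k))

/-!
For each row `i` and column `j`, `rk·(a_{ij} + q) + i ∈ Δ` lies in the residue class of column
`j + 1`, so minimality of the `p`-basis gives `a_{i,j+1} + p·c_{ij} = a_{ij} + q` for some
`c_{ij} ∈ ℕ`, i.e. the binomial `t^{rk q} e_{(i,j)} - t^{rk p c_{ij}} e_{(i,j+1)}` is a syzygy.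
Modulo these cycle syzygies, multiplication by `t^{rk q}` can always be traded for a power of
`t^{rk p}`, so every vector is congruent to one with coordinates in `k[t^{rk p}]`. The exponents
`b_{ij}` are pairwise incongruent modulo `rk·p`, so the `t^{b_{ij}}` are linearly independent over
`k[t^{rk p}]` and such a vector is a syzygy only if it vanishes. Hence the cycle syzygies generate
the kernel, and a minimal generating set is extracted from the finitely many nonzero ones.
-/

open Polynomial

theorem Set.Finite.exists_minimal_subset {α : Type*} {P : Set α → Prop} {G : Set α}
    (hG : G.Finite) (hP : P G) : ∃ G₀ ⊆ G, P G₀ ∧ ∀ G' ⊆ G₀, G' ≠ G₀ → ¬ P G' := by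
  have hfin : {G' | G' ⊆ G ∧ P G'}.Finite := hG.finite_subsets.subset fun _ h ↦ h.1
  obtain ⟨G₀, -, ⟨hG₀G, hPG₀⟩, hmin⟩ := hfin.exists_le_minimal (a := G) ⟨subset_rfl, hP⟩
  exact ⟨G₀, hG₀G, hPG₀, fun G' hG' hne hP' ↦ hne (hG'.antisymm (hmin ⟨hG'.trans hG₀G, hP'⟩ hG'))⟩

section Expand

variable {R ι : Type*} [CommSemiring R]

theorem Polynomial.eq_zero_of_sum_expand_mul_X_pow_eq_zero [Fintype ι] {N : ℕ} (hN : 0 < N)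
    {e : ι → ℕ} (he : ∀ r r', e r ≡ e r' [MOD N] → r = r') {f : ι → R[X]}
    (h : ∑ r, expand R N (f r) * X ^ e r = 0) (r : ι) : f r = 0 := by
  ext m
  -- the coefficient of `X ^ (N * m + e r)` only sees the `r`-th summand
  have hcoeff := congrArg (Polynomial.coeff · (N * m + e r)) h
  simp only [finsetSum_coeff, Polynomial.coeff_zero] at hcoeff
  rw [Finset.sum_eq_single r, coeff_mul_X_pow, coeff_expand_mul' hN] at hcoeff
  · simpa using hcoeff
  · intro r' _ hr'
    rw [coeff_mul_X_pow', coeff_expand hN]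
    split_ifs with hle hdvd
    · have hmod : N * m + e r ≡ e r [MOD N] := by simp [Nat.ModEq]
      exact absurd (he r' r (((Nat.modEq_iff_dvd' hle).2 hdvd).trans hmod)) hr'
    · rfl
    · rfl
  · simp

theorem Polynomial.exists_expand_eq_of_mem_adjoin {S : Subalgebra R R[X]} {N : ℕ} {g : S}
    (hg : (g : R[X]) = X ^ N) {x : S} (hx : x ∈ Algebra.adjoin R {g}) :
    ∃ f, (x : R[X]) = expand R N f := by
  rw [Algebra.adjoin_singleton_eq_range_aeval] at hx
  obtain ⟨f, rfl⟩ := hx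
  refine ⟨f, ?_⟩
  change S.val (aeval g f) = _
  rw [← aeval_algHom_apply, S.val_apply, hg]
  rfl

end Expand

section Cyclic

variable {k A ι : Type*} [CommSemiring k] [CommRing A] [Algebra k A] [Fintype ι] [DecidableEq ι]

theorem Submodule.restrictScalars_sup_pi_adjoin_eq_top {x y : A}
    (hxy : Algebra.adjoin k {x, y} = ⊤) {M : Submodule A (ι → A)} (σ : ι → ι) (c : ι → ℕ)
    (hM : ∀ r, Pi.single r y - Pi.single (σ r) (x ^ c r) ∈ M) :
    M.restrictScalars k ⊔ pi Set.univ (fun _ ↦ Subalgebra.toSubmodule (Algebra.adjoin k {x})) =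
      ⊤ := by
  set N := pi Set.univ (fun _ : ι ↦ Subalgebra.toSubmodule (Algebra.adjoin k {x}))
  have single_mem {b : A} (r : ι) (hb : b ∈ Algebra.adjoin k {x}) : Pi.single r b ∈ N :=
    mem_pi.2 fun s _ ↦ by
      rcases eq_or_ne s r with rfl | hs
      · simpa using hb
      · simp [hs]
  -- the `a` with `a • (M ⊔ N) ≤ M ⊔ N` form a subalgebra; `hM` is what puts `y` in it
  have smul_closed (a : A) : ∀ w ∈ M.restrictScalars k ⊔ N, a • w ∈ M.restrictScalars k ⊔ N := by
    have ha : a ∈ Algebra.adjoin k {x, y} := hxy ▸ Algebra.mem_top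
    induction ha using Algebra.adjoin_induction with
    | mem z hz =>
      intro w hw
      obtain ⟨m, hm, n, hn, rfl⟩ := mem_sup.1 hw
      rw [smul_add]
      refine add_mem (mem_sup_left ((restrictScalars_mem k M _).2 (M.smul_mem z hm))) ?_
      obtain rfl | rfl : z = x ∨ z = y := hz
      · exact mem_sup_right (mem_pi.2 fun s _ ↦
          Subalgebra.mul_mem _ (Algebra.self_mem_adjoin_singleton k z) (mem_pi.1 hn s trivial))
      · rw [← Finset.univ_sum_single n, Finset.smul_sum]
        refine sum_mem fun s _ ↦ ?_
        have hsplit : z • Pi.single s (n s) = n s • (Pi.single s z - Pi.single (σ s) (x ^ c s)) +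
            Pi.single (σ s) (n s * x ^ c s) := by
          ext t
          simp only [Pi.smul_apply, Pi.add_apply, Pi.sub_apply, Pi.single_apply, smul_eq_mul]
          split_ifs <;> ring
        have hxc : n s * x ^ c s ∈ Algebra.adjoin k {x} :=
          Subalgebra.mul_mem _ (mem_pi.1 hn s trivial)
            (Subalgebra.pow_mem _ (Algebra.self_mem_adjoin_singleton k x) _)
        rw [hsplit]
        exact add_mem (mem_sup_left ((restrictScalars_mem k M _).2 (M.smul_mem _ (hM s))))
          (mem_sup_right (single_mem _ hxc))
    | algebraMap r =>
      intro w hw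
      rw [algebraMap_smul]
      exact Submodule.smul_mem _ r hw
    | add a b _ _ ha hb =>
      intro w hw
      rw [add_smul]
      exact add_mem (ha w hw) (hb w hw)
    | mul a b _ _ ha hb =>
      intro w hw
      rw [mul_smul]
      exact ha _ (hb w hw)
  refine eq_top_iff.2 fun v _ ↦ ?_
  rw [← Finset.univ_sum_single v]
  refine sum_mem fun r _ ↦ ?_
  simpa [← Pi.single_smul] using smul_closed (v r) _ (mem_sup_right (single_mem r (one_mem _)))

end Cyclic

namespace torusAlg

variable (k : Type*) [Field k] (rk p q : ℕ)

noncomputable def genP : torusAlg k rk p q :=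
  ⟨(X : k[X]) ^ (rk * p), Algebra.subset_adjoin (Set.mem_insert _ _)⟩

noncomputable def genQ : torusAlg k rk p q :=
  ⟨(X : k[X]) ^ (rk * q), Algebra.subset_adjoin (Set.mem_insert_of_mem _ rfl)⟩

theorem adjoin_genP_genQ : Algebra.adjoin k {genP k rk p q, genQ k rk p q} = ⊤ := by
  apply Subalgebra.map_injective (f := (torusAlg k rk p q).val) Subtype.val_injective
  rw [← Algebra.adjoin_image, Set.image_pair, Algebra.map_top, Subalgebra.range_val]
  exact rfl

end torusAlg

def nextCol {p : ℕ} (j : Fin p) : Fin p := ⟨(j + 1) % p, Nat.mod_lt _ j.pos⟩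

/-- `c_{ij}`; see `IsPBasis.add_mul_cycleGap`. -/
def cycleGap {rk : ℕ} (p q : ℕ) (a : ℕ → ℕ → ℕ) (r : Fin rk × Fin p) : ℕ :=
  (a r.1 r.2 + q - a r.1 (nextCol r.2)) / p

namespace IsPBasis

variable {rk p q : ℕ} {Δ : Set ℕ} {a : ℕ → ℕ → ℕ}

theorem add_mul_cycleGap (ha : IsPBasis rk p q Δ a)
    (hmod : ∀ γ ∈ GammaT rk p q, ∀ d ∈ Δ, γ + d ∈ Δ) (r : Fin rk × Fin p) :
    a r.1 (nextCol r.2) + p * cycleGap p q a r = a r.1 r.2 + q := by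
  obtain ⟨i, j⟩ := r
  obtain ⟨hmem, hj, -⟩ := ha i i.2 j j.2
  obtain ⟨-, hj', hmin⟩ := ha i i.2 (nextCol j) (nextCol j).2
  have hcong : a i j + q ≡ nextCol j * q [MOD p] :=
    calc a i j + q ≡ j * q + q [MOD p] := Nat.ModEq.add_right q hj
      _ = (j + 1) * q := by ring
      _ ≡ nextCol j * q [MOD p] := Nat.ModEq.mul_right q (Nat.mod_modEq _ p).symm
  have hshift : rk * (a i j + q) + i ∈ Δ := by
    convert hmod (rk * q) ⟨0, 1, by ring⟩ _ hmem using 1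
    ring
  have hle := hmin _ hshift hcong
  have hdvd : p ∣ a i j + q - a i (nextCol j) :=
    (Nat.modEq_iff_dvd' hle).1 (Nat.ModEq.trans hj' hcong.symm)
  simp only [cycleGap]
  rw [Nat.mul_div_cancel' hdvd]
  omega

theorem eq_of_modEq (ha : IsPBasis rk p q Δ a) (hcop : Nat.Coprime p q) {r r' : Fin rk × Fin p}
    (h : rk * a r.1 r.2 + r.1 ≡ rk * a r'.1 r'.2 + r'.1 [MOD rk * p]) : r = r' := by
  obtain ⟨i, j⟩ := r
  obtain ⟨u, v⟩ := r'
  obtain rfl : i = u := Fin.ext <| by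
    simpa [Nat.ModEq, Nat.mul_add_mod, Nat.mod_eq_of_lt] using h.of_mul_right p
  have haa : a i j ≡ a i v [MOD p] :=
    Nat.ModEq.mul_left_cancel' i.pos.ne' (Nat.ModEq.add_right_cancel' i h)
  have hjv : j * q ≡ v * q [MOD p] :=
    (ha i i.2 j j.2).2.1.symm.trans (haa.trans (ha i i.2 v v.2).2.1)
  obtain rfl : j = v := Fin.ext <| by
    simpa [Nat.ModEq, Nat.mod_eq_of_lt] using Nat.ModEq.cancel_right_of_coprime hcop hjv
  rfl

end IsPBasis

section Syzygies

variable (k : Type*) [Field k] (rk p q : ℕ) (a : ℕ → ℕ → ℕ)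

noncomputable def cycleSyzygy (r : Fin rk × Fin p) : Fin rk × Fin p → torusAlg k rk p q :=
  Pi.single r (torusAlg.genQ k rk p q) -
    Pi.single (r.1, nextCol r.2) (torusAlg.genP k rk p q ^ cycleGap p q a r)

noncomputable def pBasisMap : (Fin rk × Fin p → torusAlg k rk p q) →ₗ[torusAlg k rk p q] k[X] :=
  Fintype.linearCombination (torusAlg k rk p q) fun r ↦ (X : k[X]) ^ (rk * a r.1 r.2 + r.1)

variable {k rk p q a}

theorem pBasisMap_apply (v : Fin rk × Fin p → torusAlg k rk p q) :
    pBasisMap k rk p q a v = ∑ r : Fin rk × Fin p,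
      (v r : k[X]) * (X : k[X]) ^ (rk * a (r.1 : ℕ) (r.2 : ℕ) + (r.1 : ℕ)) := by
  simp [pBasisMap, Fintype.linearCombination_apply, Subalgebra.smul_def]

theorem pBasisMap_cycleSyzygy {Δ : Set ℕ} (hmod : ∀ γ ∈ GammaT rk p q, ∀ d ∈ Δ, γ + d ∈ Δ)
    (ha : IsPBasis rk p q Δ a) (r : Fin rk × Fin p) :
    pBasisMap k rk p q a (cycleSyzygy k rk p q a r) = 0 := by
  have hgap := ha.add_mul_cycleGap hmod r
  simp only [cycleSyzygy, map_sub, pBasisMap, Fintype.linearCombination_apply_single,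
    Subalgebra.smul_def, torusAlg.genP, torusAlg.genQ]
  rw [sub_eq_zero, SubmonoidClass.coe_pow, smul_eq_mul, smul_eq_mul, ← pow_mul, ← pow_add,
    ← pow_add]
  congr 1
  linear_combination rk * hgap.symm

theorem ker_pBasisMap_le_span_cycleSyzygy (hcop : Nat.Coprime p q) {Δ : Set ℕ}
    (hmod : ∀ γ ∈ GammaT rk p q, ∀ d ∈ Δ, γ + d ∈ Δ) (ha : IsPBasis rk p q Δ a) :
    LinearMap.ker (pBasisMap k rk p q a) ≤
      Submodule.span (torusAlg k rk p q) (Set.range (cycleSyzygy k rk p q a)) := by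
  intro v hv
  set M := Submodule.span (torusAlg k rk p q) (Set.range (cycleSyzygy k rk p q a))
  have hsup := Submodule.restrictScalars_sup_pi_adjoin_eq_top (torusAlg.adjoin_genP_genQ k rk p q)
    (M := M) (fun r ↦ (r.1, nextCol r.2)) (cycleGap p q a)
    (fun r ↦ Submodule.subset_span ⟨r, rfl⟩)
  obtain ⟨m, hm, n, hn, rfl⟩ := Submodule.mem_sup.1 (hsup ▸ Submodule.mem_top : v ∈ _)
  have hmker : m ∈ LinearMap.ker (pBasisMap k rk p q a) :=
    Submodule.span_le.2 (Set.range_subset_iff.2 (pBasisMap_cycleSyzygy hmod ha)) hm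
  have hn0 : pBasisMap k rk p q a n = 0 := by
    simpa [LinearMap.mem_ker.1 hmker] using LinearMap.mem_ker.1 hv
  choose f hf using fun s ↦ exists_expand_eq_of_mem_adjoin rfl (Submodule.mem_pi.1 hn s trivial)
  suffices n = 0 by simpa [this] using hm
  funext s
  have hf0 := eq_zero_of_sum_expand_mul_X_pow_eq_zero (Nat.mul_pos s.1.pos s.2.pos)
    (fun r r' h ↦ ha.eq_of_modEq hcop h) (f := f) (by simpa [pBasisMap_apply, hf] using hn0) s
  exact Subtype.ext (by simp [hf, hf0])

theorem cycleSyzygy_isBinomial {Δ : Set ℕ} (hmod : ∀ γ ∈ GammaT rk p q, ∀ d ∈ Δ, γ + d ∈ Δ)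
    (ha : IsPBasis rk p q Δ a) {r : Fin rk × Fin p} (h0 : cycleSyzygy k rk p q a r ≠ 0) :
    ∃ (s s' : Fin rk × Fin p) (γ γ' : ℕ),
      γ ∈ GammaT rk p q ∧ γ' ∈ GammaT rk p q ∧ s ≠ s' ∧
      (cycleSyzygy k rk p q a r s : k[X]) = (X : k[X]) ^ γ ∧
      (cycleSyzygy k rk p q a r s' : k[X]) = -((X : k[X]) ^ γ') ∧
      ∀ t, t ≠ s → t ≠ s' → cycleSyzygy k rk p q a r t = 0 := by
  have hgap := ha.add_mul_cycleGap hmod r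
  have hne : r ≠ (r.1, nextCol r.2) := by
    intro hr
    have hpq : p * cycleGap p q a r = q := by
      have hj : nextCol r.2 = r.2 := (congrArg Prod.snd hr).symm
      rw [hj] at hgap
      omega
    have hpow : torusAlg.genP k rk p q ^ cycleGap p q a r = torusAlg.genQ k rk p q :=
      Subtype.ext (by simp [torusAlg.genP, torusAlg.genQ, ← pow_mul, mul_assoc, hpq])
    exact h0 (by rw [cycleSyzygy, hpow, ← hr, sub_self])
  refine ⟨r, (r.1, nextCol r.2), rk * q, rk * p * cycleGap p q a r, ⟨0, 1, by ring⟩,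
    ⟨cycleGap p q a r, 0, by ring⟩, hne, ?_, ?_, fun t ht ht' ↦ ?_⟩
  · simp [cycleSyzygy, hne.symm, torusAlg.genQ]
  · simp [cycleSyzygy, hne, torusAlg.genP, pow_mul]
  · simp [cycleSyzygy, ht, ht']

end Syzygies

theorem syzygies_minimal_basis_binomial_general
    {k : Type*} [Field k]
    (p q rk : ℕ) (hcop : Nat.Coprime p q)
    (Δ : Set ℕ)
    (hmod : ∀ γ ∈ GammaT rk p q, ∀ d ∈ Δ, γ + d ∈ Δ)
    (a : ℕ → ℕ → ℕ) (ha : IsPBasis rk p q Δ a) :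
    ∃ G : Set ((Fin rk × Fin p) → ↥(torusAlg k rk p q)),
      (∀ w ∈ G,
        ∑ r : Fin rk × Fin p,
          (w r : Polynomial k) * Polynomial.X ^ (rk * a (r.1 : ℕ) (r.2 : ℕ) + (r.1 : ℕ))
          = 0) ∧
      (∀ v : (Fin rk × Fin p) → ↥(torusAlg k rk p q),
        (∑ r : Fin rk × Fin p,
            (v r : Polynomial k) * Polynomial.X ^ (rk * a (r.1 : ℕ) (r.2 : ℕ) + (r.1 : ℕ))
            = 0) →
        v ∈ Submodule.span (↥(torusAlg k rk p q)) G) ∧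
      (∀ G' ⊆ G, G' ≠ G →
        ∃ v : (Fin rk × Fin p) → ↥(torusAlg k rk p q),
          (∑ r : Fin rk × Fin p,
              (v r : Polynomial k) * Polynomial.X ^ (rk * a (r.1 : ℕ) (r.2 : ℕ) + (r.1 : ℕ))
              = 0) ∧
          v ∉ Submodule.span (↥(torusAlg k rk p q)) G') ∧
      (∀ w ∈ G,
        ∃ (r r' : Fin rk × Fin p) (γ γ' : ℕ),
          γ ∈ GammaT rk p q ∧ γ' ∈ GammaT rk p q ∧ r ≠ r' ∧
          (w r : Polynomial k) = Polynomial.X ^ γ ∧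
          (w r' : Polynomial k) = -(Polynomial.X ^ γ') ∧
          ∀ s, s ≠ r → s ≠ r' → w s = 0) := by
  -- discarding `0` first keeps it out of the minimal set, so every member is a genuine binomial
  have hspan : LinearMap.ker (pBasisMap k rk p q a) ≤ Submodule.span (torusAlg k rk p q)
      (Set.range (cycleSyzygy k rk p q a) \ {0}) := by
    rw [Submodule.span_sdiff_singleton_zero]
    exact ker_pBasisMap_le_span_cycleSyzygy hcop hmod ha
  obtain ⟨G, hGsub, hGspan, hGmin⟩ :=
    (Set.finite_range _).sdiff.exists_minimal_subset (P := fun G ↦ _ ≤ Submodule.span _ G) hspan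
  simp only [← pBasisMap_apply]
  refine ⟨G, fun w hw ↦ ?_, fun v hv ↦ hGspan hv, fun G' hG' hne ↦ ?_, fun w hw ↦ ?_⟩
  · obtain ⟨⟨r, rfl⟩, -⟩ := hGsub hw
    exact pBasisMap_cycleSyzygy hmod ha r
  · obtain ⟨v, hv, hvG'⟩ := Set.not_subset.1 (hGmin G' hG' hne)
    exact ⟨v, LinearMap.mem_ker.1 hv, hvG'⟩
  · obtain ⟨⟨r, rfl⟩, h0⟩ := hGsub hw
    exact cycleSyzygy_isBinomial hmod ha h0

/-- Let `Δ` be a standard rank-`rk` `Γ̃`-module with `p`-basis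
`b_{i,j} = rk·a_{i,j} + i`, and let `φ : A^{rk·p} → k[t]` be the `A`-linear map sending
`e_{(i,j)}` to `t^{b_{i,j}}`.  Then the module of syzygies `ker φ` admits a minimal
generating set over `A` consisting of vectors with exactly two nonzero coordinates, of the
form `t^γ·e_{(i,j)} - t^{γ'}·e_{(u,v)}` with `γ, γ' ∈ Γ̃`. -/
theorem syzygies_minimal_basis_binomial
    {k : Type*} [Field k]
    (p q rk : ℕ) (hp : 0 < p) (hpq : p < q) (hcop : Nat.Coprime p q) (hrk : 1 ≤ rk)
    (Δ : Set ℕ)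
    (hmod : ∀ γ ∈ GammaT rk p q, ∀ d ∈ Δ, γ + d ∈ Δ)
    (hstd : ∀ i < rk, i ∈ Δ)
    (a : ℕ → ℕ → ℕ) (ha : IsPBasis rk p q Δ a) :
    ∃ G : Set ((Fin rk × Fin p) → ↥(torusAlg k rk p q)),
      (∀ w ∈ G,
        ∑ r : Fin rk × Fin p,
          (w r : Polynomial k) * Polynomial.X ^ (rk * a (r.1 : ℕ) (r.2 : ℕ) + (r.1 : ℕ))
          = 0) ∧
      (∀ v : (Fin rk × Fin p) → ↥(torusAlg k rk p q),
        (∑ r : Fin rk × Fin p,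
            (v r : Polynomial k) * Polynomial.X ^ (rk * a (r.1 : ℕ) (r.2 : ℕ) + (r.1 : ℕ))
            = 0) →
        v ∈ Submodule.span (↥(torusAlg k rk p q)) G) ∧
      (∀ G' ⊆ G, G' ≠ G →
        ∃ v : (Fin rk × Fin p) → ↥(torusAlg k rk p q),
          (∑ r : Fin rk × Fin p,
              (v r : Polynomial k) * Polynomial.X ^ (rk * a (r.1 : ℕ) (r.2 : ℕ) + (r.1 : ℕ))
              = 0) ∧
          v ∉ Submodule.span (↥(torusAlg k rk p q)) G') ∧
      (∀ w ∈ G,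
        ∃ (r r' : Fin rk × Fin p) (γ γ' : ℕ),
          γ ∈ GammaT rk p q ∧ γ' ∈ GammaT rk p q ∧ r ≠ r' ∧
          (w r : Polynomial k) = Polynomial.X ^ γ ∧
          (w r' : Polynomial k) = -(Polynomial.X ^ γ') ∧
          ∀ s, s ≠ r → s ≠ r' → w s = 0) :=
  syzygies_minimal_basis_binomial_general p q rk hcop Δ hmod a ha
end
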